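/- There exists a geodesic Ptolemy metric space that is not uniquely geodesic. -/

import Mathlib

def IsPtolemy (X : Type*) [MetricSpace X] : Prop :=
  ∀ x y u v : X, dist x y * dist u v ≤ dist x u * dist y v + dist x v * dist y u

/-- `γ` is a geodesic segment from `x` to `y`, parameterized by arclength on `[0, dist x y]`. -/
def IsGeodesicSegment {X : Type*} [MetricSpace X] (γ : ℝ → X) (x y : X) : Prop :=
  γ 0 = x ∧ γ (dist x y) = y ∧
    ∀ s ∈ Set.Icc (0 : ℝ) (dist x y), ∀ t ∈ Set.Icc (0 : ℝ) (dist x y),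
      dist (γ s) (γ t) = |s - t|

/-- A metric space is geodesic if any two points are joined by a geodesic. -/
def IsGeodesicSpace (X : Type*) [MetricSpace X] : Prop :=
  ∀ x y : X, ∃ γ : ℝ → X, IsGeodesicSegment γ x y

/-- Any two points are joined by exactly one geodesic (up to its values on the
parameter interval). -/
def UniquelyGeodesic (X : Type*) [MetricSpace X] : Prop :=
  ∀ (x y : X) (γ₁ γ₂ : ℝ → X), IsGeodesicSegment γ₁ x y → IsGeodesicSegment γ₂ x y →
    ∀ t ∈ Set.Icc (0 : ℝ) (dist x y), γ₁ t = γ₂ t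

/-!
Over a metric space `X`, adjoin freely, for all distinct points `p`, `q` already constructed and
every `θ ∈ (0, 1)`, a new point `seg p q θ`. Two points of the same segment are at distance
`|θ - φ| d(p, q)`; otherwise the heavier term `seg p q θ`, which the lighter one `z` cannot
contain, is at distance `(1 - θ) d(p, z) + θ d(q, z)` from it. The segments are geodesics, so the
space is geodesic, and for `X = ℝ` the new segment from `0` to `1` differs from the old one.

Nonnegativity, the triangle inequality and Ptolemy's inequality are affine in the distances from
any single point of the configuration. Along the segment of its heaviest point the defect is
therefore a piecewise affine function of `θ`, whose breakpoints are the parameters of the other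
points of the configuration lying on that segment. It is nonnegative at the ends `p`, `q` by
induction on the total weight, and at the breakpoints because two points of the configuration
coincide there; hence it is nonnegative everywhere.
-/

open Set

theorem nonneg_of_piecewise_affine {g : ℝ → ℝ} {S : Set ℝ} (hS : S.Finite)
    (hg : ∀ l r, (∀ y ∈ S, y ∉ Ioo l r) → ∃ α β : ℝ, ∀ t ∈ Icc l r, g t = α + β * t)
    (h0 : 0 ≤ g 0) (h1 : 0 ≤ g 1) (hgS : ∀ y ∈ S, 0 ≤ g y) {x : ℝ} (hx : x ∈ Icc 0 1) :
    0 ≤ g x := by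
  classical
  set T := insert (0 : ℝ) (insert 1 hS.toFinset)
  have hT : ∀ y ∈ T, 0 ≤ g y := by
    simpa [T, h0, h1] using hgS
  have hlo : (T.filter (· ≤ x)).Nonempty := ⟨0, Finset.mem_filter.2 ⟨by simp [T], hx.1⟩⟩
  have hhi : (T.filter (x ≤ ·)).Nonempty := ⟨1, Finset.mem_filter.2 ⟨by simp [T], hx.2⟩⟩
  obtain ⟨hlT, hlx⟩ := Finset.mem_filter.1 (Finset.max'_mem _ hlo)
  obtain ⟨hrT, hxr⟩ := Finset.mem_filter.1 (Finset.min'_mem _ hhi)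
  set l := (T.filter (· ≤ x)).max' hlo
  set r := (T.filter (x ≤ ·)).min' hhi
  obtain ⟨α, β, hαβ⟩ := hg l r fun y hy hylr => by
    rcases le_total y x with hyx | hxy
    · linarith [hylr.1, (T.filter (· ≤ x)).le_max' y (Finset.mem_filter.2 ⟨by simp [T, hy], hyx⟩)]
    · linarith [hylr.2, (T.filter (x ≤ ·)).min'_le y (Finset.mem_filter.2 ⟨by simp [T, hy], hxy⟩)]
  have gl := hαβ l ⟨le_rfl, hlx.trans hxr⟩ ▸ hT l hlT
  have gr := hαβ r ⟨hlx.trans hxr, le_rfl⟩ ▸ hT r hrT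
  rw [hαβ x ⟨hlx, hxr⟩]
  rcases le_total 0 β with hβ | hβ
  · nlinarith [mul_le_mul_of_nonneg_left hlx hβ]
  · nlinarith [mul_le_mul_of_nonpos_left hxr hβ]

theorem IsGeodesicSegment.comp_isometry {X Y : Type*} [MetricSpace X] [MetricSpace Y]
    {f : X → Y} (hf : Isometry f) {γ : ℝ → X} {x y : X} (hγ : IsGeodesicSegment γ x y) :
    IsGeodesicSegment (f ∘ γ) (f x) (f y) := by
  obtain ⟨h0, h1, hd⟩ := hγ
  refine ⟨by simp [h0], by simp [hf.dist_eq, h1], fun s hs t ht => ?_⟩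
  rw [hf.dist_eq] at hs ht
  simpa [hf.dist_eq] using hd s hs t ht

theorem isPtolemy_of_innerProductSpace (V : Type*) [NormedAddCommGroup V] [InnerProductSpace ℝ V] :
    IsPtolemy V := fun x y u v => by
  have := EuclideanGeometry.mul_dist_le_mul_dist_add_mul_dist x u y v
  rw [dist_comm u y] at this
  linarith

inductive SegTerm (X : Type*) : Type _
  | base : X → SegTerm X
  | seg : SegTerm X → SegTerm X → ℝ → SegTerm X

namespace SegTerm

variable {X : Type*}

def weight : SegTerm X → ℕ
  | base _ => 0
  | seg p q _ => p.weight + q.weight + 1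

def Valid : SegTerm X → Prop
  | base _ => True
  | seg p q θ => p.Valid ∧ q.Valid ∧ p ≠ q ∧ θ ∈ Ioo 0 1

@[simp] lemma wt_base (x : X) : (base x).weight = 0 := rfl
@[simp] lemma wt_seg (p q : SegTerm X) (θ : ℝ) : (seg p q θ).weight = p.weight + q.weight + 1 := rfl

lemma exists_eq_base_of_weight_eq_zero {a : SegTerm X} (h : a.weight = 0) : ∃ x, a = base x := by
  cases a with
  | base x => exact ⟨x, rfl⟩
  | seg p q θ => simp at h

lemma Valid.param_mem_Icc {p q : SegTerm X} {θ : ℝ} (h : (seg p q θ).Valid) : θ ∈ Icc 0 1 :=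
  Ioo_subset_Icc_self h.2.2.2

open Classical in
noncomputable def d [Dist X] : SegTerm X → SegTerm X → ℝ
  | base x, base y => dist x y
  | base x, seg p q θ => (1 - θ) * d (base x) p + θ * d (base x) q
  | seg p q θ, base y => (1 - θ) * d p (base y) + θ * d q (base y)
  | seg p q θ, seg r s φ =>
      if p = r ∧ q = s then |θ - φ| * d p q
      else if (seg r s φ).weight ≤ (seg p q θ).weight then
        (1 - θ) * d p (seg r s φ) + θ * d q (seg r s φ)
      else (1 - φ) * d (seg p q θ) r + φ * d (seg p q θ) s
termination_by a b => a.weight + b.weight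
decreasing_by all_goals simp only [weight]; omega

section PseudoMetric

variable [PseudoMetricSpace X]

@[simp] lemma d_base_base (x y : X) : d (base x) (base y) = dist x y := by rw [d]

lemma d_seg_seg (p q : SegTerm X) (θ φ : ℝ) : d (seg p q θ) (seg p q φ) = |θ - φ| * d p q := by
  rw [d]; simp

@[simp] lemma d_self (a : SegTerm X) : d a a = 0 := by
  cases a with
  | base x => simp
  | seg p q θ => simp [d_seg_seg]

lemma d_seg_left {p q z : SegTerm X} {θ : ℝ} (hz : ∀ φ, z ≠ seg p q φ)
    (hw : z.weight ≤ (seg p q θ).weight) : d (seg p q θ) z = (1 - θ) * d p z + θ * d q z := by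
  cases z with
  | base y => rw [d]
  | seg r s φ =>
    rw [d, if_neg, if_pos hw]
    rintro ⟨rfl, rfl⟩
    exact hz φ rfl

lemma d_seg_right {p q z : SegTerm X} {θ : ℝ} (hw : z.weight < (seg p q θ).weight) :
    d z (seg p q θ) = (1 - θ) * d z p + θ * d z q := by
  cases z with
  | base y => rw [d]
  | seg r s φ =>
    rw [d, if_neg, if_neg (by omega)]
    rintro ⟨rfl, rfl⟩
    simp at hw

lemma d_symm (a b : SegTerm X) : d a b = d b a := by
  induction hn : a.weight + b.weight using Nat.strong_induction_on generalizing a b with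
  | _ n ih =>
  subst hn
  wlog hw : b.weight ≤ a.weight generalizing a b
  · exact (this b a (fun m hm => ih m (by omega)) (by omega)).symm
  cases a with
  | base x =>
    obtain ⟨y, rfl⟩ := exists_eq_base_of_weight_eq_zero (by simpa using hw)
    simp [dist_comm]
  | seg p q θ =>
    by_cases hb : ∃ φ, b = seg p q φ
    · obtain ⟨φ, rfl⟩ := hb
      rw [d_seg_seg, d_seg_seg, abs_sub_comm]
    push Not at hb
    rw [d_seg_left hb hw]
    rcases hw.lt_or_eq with hlt | heq
    · rw [d_seg_right hlt, ih _ (by simp) p b rfl, ih _ (by simp) q b rfl]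
    · cases b with
      | base y => simp at heq
      | seg r s φ =>
        simp only [weight] at heq
        have hne : ∀ ψ, seg p q θ ≠ seg r s ψ := fun ψ h => by cases h; exact hb φ rfl
        rw [d_seg_left hne (by simp only [weight]; omega)]
        repeat rw [d_seg_right (by simp only [weight]; omega)]
        rw [ih _ (by simp only [weight]; omega) p r rfl,
          ih _ (by simp only [weight]; omega) p s rfl,
          ih _ (by simp only [weight]; omega) q r rfl,
          ih _ (by simp only [weight]; omega) q s rfl]
        ring

-- `seg p q 0` is not a valid point, but `d` is defined on all terms, and
-- `t ↦ d (seg p q t) z` runs from `d p z` to `d q z`.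
lemma d_seg_zero {p q z : SegTerm X} (hz : ∀ y, z = seg p q y → 0 ≤ y)
    (hw : z.weight ≤ (seg p q 0).weight) : d (seg p q 0) z = d p z := by
  by_cases hf : ∃ y, z = seg p q y
  · obtain ⟨y, rfl⟩ := hf
    rw [d_seg_seg, d_seg_right (by simp), d_self, zero_sub, abs_neg, abs_of_nonneg (hz y rfl)]
    ring
  · push Not at hf
    rw [d_seg_left hf hw]
    ring

lemma d_seg_one {p q z : SegTerm X} (hz : ∀ y, z = seg p q y → y ≤ 1)
    (hw : z.weight ≤ (seg p q 1).weight) : d (seg p q 1) z = d q z := by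
  by_cases hf : ∃ y, z = seg p q y
  · obtain ⟨y, rfl⟩ := hf
    rw [d_seg_seg, d_seg_right (by simp), d_self, abs_of_nonneg (by linarith [hz y rfl]),
      d_symm q p]
    ring
  · push Not at hf
    rw [d_seg_left hf hw]
    ring

lemma exists_affine_d_seg {p q z : SegTerm X} (hw : z.weight ≤ p.weight + q.weight + 1) {l r : ℝ}
    (hlr : ∀ y, z = seg p q y → y ∉ Ioo l r) :
    ∃ α β : ℝ, ∀ t ∈ Icc l r, d (seg p q t) z = α + β * t := by
  by_cases hf : ∃ y, z = seg p q y
  · obtain ⟨y, rfl⟩ := hf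
    simp only [d_seg_seg]
    rcases le_or_gt y l with hyl | hly
    · exact ⟨-y * d p q, d p q, fun t ht => by rw [abs_of_nonneg (by linarith [ht.1])]; ring⟩
    · have hry : r ≤ y := not_lt.1 fun hyr => hlr y rfl ⟨hly, hyr⟩
      exact ⟨y * d p q, -d p q, fun t ht => by rw [abs_of_nonpos (by linarith [ht.2])]; ring⟩
  · push Not at hf
    refine ⟨d p z, d q z - d p z, fun t _ => ?_⟩
    rw [d_seg_left hf (by simpa using hw)]
    ring

theorem nonneg_at_seg {ι : Type*} [Fintype ι] (F : SegTerm X → ℝ) (z : ι → SegTerm X) (c : ℝ)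
    (w : ι → ℝ) (hF : ∀ a, F a = c + ∑ i, w i * d a (z i)) {p q : SegTerm X} {x : ℝ}
    (hx : x ∈ Icc 0 1) (hw : ∀ i, (z i).weight ≤ (seg p q x).weight)
    (hzI : ∀ i y, z i = seg p q y → y ∈ Icc 0 1)
    (hp : 0 ≤ F p) (hq : 0 ≤ F q) (hmeet : ∀ i y, z i = seg p q y → 0 ≤ F (z i)) :
    0 ≤ F (seg p q x) := by
  have hw' : ∀ i t, (z i).weight ≤ (seg p q t).weight := fun i t => by simpa using hw i
  apply nonneg_of_piecewise_affine (g := fun t => F (seg p q t))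
    (S := ⋃ i, {y | z i = seg p q y}) _ _ _ _ _ hx
  · refine finite_iUnion fun i => Subsingleton.finite fun y₁ h₁ y₂ h₂ => ?_
    have := h₁.symm.trans h₂
    injection this
  · intro l r hS
    have := fun i => exists_affine_d_seg (z := z i) (by simpa using hw i)
      (l := l) (r := r) fun y hy => hS y (mem_iUnion.2 ⟨i, hy⟩)
    choose α β hαβ using this
    refine ⟨c + ∑ i, w i * α i, ∑ i, w i * β i, fun t ht => ?_⟩
    simp only [hF, hαβ _ t ht, mul_add, Finset.sum_add_distrib, Finset.sum_mul, mul_assoc]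
    ring
  · simpa only [hF, d_seg_zero (fun y hy => (hzI _ y hy).1) (hw' _ 0)] using hp
  · simpa only [hF, d_seg_one (fun y hy => (hzI _ y hy).2) (hw' _ 1)] using hq
  · intro y hy
    obtain ⟨i, hi⟩ := mem_iUnion.1 hy
    simpa only [← show z i = seg p q y from hi] using hmeet i y hi

theorem d_nonneg {a b : SegTerm X} (ha : a.Valid) (hb : b.Valid) : 0 ≤ d a b := by
  induction hn : a.weight + b.weight using Nat.strong_induction_on generalizing a b with
  | _ n ih =>
  subst hn
  wlog hw : b.weight ≤ a.weight generalizing a b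
  · rw [d_symm]
    exact this hb ha (fun m hm => ih m (by omega)) (by omega)
  cases a with
  | base x =>
    obtain ⟨y, rfl⟩ := exists_eq_base_of_weight_eq_zero (by simpa using hw)
    simp
  | seg p q x =>
    obtain ⟨hp, hq, -, hx⟩ := ha
    exact nonneg_at_seg (fun a => d a b) (fun _ : Unit => b) 0 (fun _ => 1) (by simp)
      (Ioo_subset_Icc_self hx) (fun _ => hw) (fun _ y h => (h ▸ hb).param_mem_Icc)
      (ih _ (by simp) hp hb rfl) (ih _ (by simp) hq hb rfl) (by simp)

theorem d_triangle {a b c : SegTerm X} (ha : a.Valid) (hb : b.Valid) (hc : c.Valid) :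
    d a c ≤ d a b + d b c := by
  induction hn : a.weight + b.weight + c.weight using Nat.strong_induction_on
    generalizing a b c with
  | _ n ih =>
  subst hn
  wlog hca : c.weight ≤ a.weight generalizing a c
  · rw [d_symm a c, d_symm a b, d_symm b c, add_comm]
    exact this hc ha (fun m hm => ih m (by omega)) (by omega)
  rcases le_total b.weight a.weight with hba | hab
  · cases a with
    | base x =>
      obtain ⟨y, rfl⟩ := exists_eq_base_of_weight_eq_zero (by simpa using hba)
      obtain ⟨z, rfl⟩ := exists_eq_base_of_weight_eq_zero (by simpa using hca)
      simpa using dist_triangle x y z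
    | seg p q x =>
      obtain ⟨hp, hq, -, hx⟩ := ha
      have hz : ∀ i, (![b, c] i).Valid := Fin.forall_fin_two.2 ⟨hb, hc⟩
      have := nonneg_at_seg (p := p) (q := q) (fun a => d a b + d b c - d a c) ![b, c] (d b c)
        ![1, -1] (fun _ => by simp [Fin.sum_univ_two]; ring) (Ioo_subset_Icc_self hx)
        (Fin.forall_fin_two.2 ⟨hba, hca⟩) (fun i y h => (h ▸ hz i).param_mem_Icc)
        (by linarith [ih _ (by simp) hp hb hc rfl]) (by linarith [ih _ (by simp) hq hb hc rfl])
        (by simp [Fin.forall_fin_two, d_symm c b, d_nonneg hb hc])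
      linarith
  · cases b with
    | base y =>
      obtain ⟨x, rfl⟩ := exists_eq_base_of_weight_eq_zero (by simpa using hab)
      obtain ⟨z, rfl⟩ := exists_eq_base_of_weight_eq_zero (by simpa using hca.trans hab)
      simpa using dist_triangle x y z
    | seg p q y =>
      obtain ⟨hp, hq, -, hy⟩ := hb
      have hz : ∀ i, (![a, c] i).Valid := Fin.forall_fin_two.2 ⟨ha, hc⟩
      have := nonneg_at_seg (p := p) (q := q) (fun b => d a b + d b c - d a c) ![a, c] (-d a c)
        ![1, 1] (fun _ => by simp [Fin.sum_univ_two, d_symm a]; ring) (Ioo_subset_Icc_self hy)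
        (Fin.forall_fin_two.2 ⟨hab, hca.trans hab⟩) (fun i y h => (h ▸ hz i).param_mem_Icc)
        (by linarith [ih _ (by simp) ha hp hc rfl]) (by linarith [ih _ (by simp) ha hq hc rfl])
        (by simp [Fin.forall_fin_two])
      linarith

end PseudoMetric

variable [MetricSpace X]

theorem eq_of_d_eq_zero {a b : SegTerm X} (ha : a.Valid) (hb : b.Valid) (h : d a b = 0) :
    a = b := by
  induction hn : a.weight + b.weight using Nat.strong_induction_on generalizing a b with
  | _ n ih =>
  subst hn
  wlog hw : b.weight ≤ a.weight generalizing a b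
  · exact (this hb ha (by rwa [d_symm]) (fun m hm => ih m (by omega)) (by omega)).symm
  cases a with
  | base x =>
    obtain ⟨y, rfl⟩ := exists_eq_base_of_weight_eq_zero (by simpa using hw)
    simpa using h
  | seg p q x =>
    obtain ⟨hp, hq, hpq, hx⟩ := ha
    by_cases hf : ∃ y, b = seg p q y
    · obtain ⟨y, rfl⟩ := hf
      have hpq' : d p q ≠ 0 := fun h' => hpq (ih _ (by simp only [weight]; omega) hp hq h' rfl)
      rw [d_seg_seg, mul_eq_zero, abs_eq_zero, sub_eq_zero] at h
      rw [h.resolve_right hpq']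
    · push Not at hf
      rw [d_seg_left hf hw] at h
      obtain ⟨hpb, hqb⟩ := (add_eq_zero_iff_of_nonneg
        (mul_nonneg (by linarith [hx.2]) (d_nonneg hp hb))
        (mul_nonneg hx.1.le (d_nonneg hq hb))).1 h
      have hpb := ih _ (by simp) hp hb ((mul_eq_zero.1 hpb).resolve_left (by linarith [hx.2])) rfl
      have hqb := ih _ (by simp) hq hb ((mul_eq_zero.1 hqb).resolve_left hx.1.ne') rfl
      exact absurd (hpb.trans hqb.symm) hpq

theorem d_ptolemy (hX : IsPtolemy X) {a b u v : SegTerm X} (ha : a.Valid) (hb : b.Valid)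
    (hu : u.Valid) (hv : v.Valid) : d a b * d u v ≤ d a u * d b v + d a v * d b u := by
  induction hn : a.weight + b.weight + u.weight + v.weight using Nat.strong_induction_on
    generalizing a b u v with
  | _ n ih =>
  subst hn
  -- the symmetries `(a b)(u v)` and `(a u)(b v)` of Ptolemy's inequality move any point to
  -- the front
  wlog hmax : b.weight ≤ a.weight ∧ u.weight ≤ a.weight ∧ v.weight ≤ a.weight generalizing a b u v
  · obtain h | h | h : (a.weight ≤ b.weight ∧ u.weight ≤ b.weight ∧ v.weight ≤ b.weight) ∨
        (a.weight ≤ u.weight ∧ b.weight ≤ u.weight ∧ v.weight ≤ u.weight) ∨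
        (a.weight ≤ v.weight ∧ b.weight ≤ v.weight ∧ u.weight ≤ v.weight) := by
      omega
    · have := this hb ha hv hu (fun m hm => ih m (by omega)) (by omega)
      rw [d_symm b a, d_symm v u] at this
      linarith
    · have := this hu hv ha hb (fun m hm => ih m (by omega)) (by omega)
      rw [d_symm u a, d_symm v b, d_symm u b, d_symm v a] at this
      linarith
    · have := this hv hu hb ha (fun m hm => ih m (by omega)) (by omega)
      rw [d_symm v b, d_symm u a, d_symm v a, d_symm u b, d_symm v u, d_symm b a] at this
      linarith
  obtain ⟨hba, hua, hva⟩ := hmax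
  cases a with
  | base x =>
    obtain ⟨y, rfl⟩ := exists_eq_base_of_weight_eq_zero (by simpa using hba)
    obtain ⟨z, rfl⟩ := exists_eq_base_of_weight_eq_zero (by simpa using hua)
    obtain ⟨w, rfl⟩ := exists_eq_base_of_weight_eq_zero (by simpa using hva)
    simpa using hX x y z w
  | seg p q x =>
    obtain ⟨hp, hq, -, hx⟩ := ha
    have hbb : 0 ≤ d b u * d b v + d b v * d b u := by
      have := d_nonneg hb hu; have := d_nonneg hb hv; positivity
    have hz : ∀ i, (![u, v, b] i).Valid := Fin.forall_fin_succ.2 ⟨hu, Fin.forall_fin_two.2 ⟨hv, hb⟩⟩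
    have := nonneg_at_seg (p := p) (q := q)
      (fun a => d a u * d b v + d a v * d b u - d a b * d u v) ![u, v, b] 0 ![d b v, d b u, -d u v]
      (fun _ => by simp [Fin.sum_univ_three]; ring) (Ioo_subset_Icc_self hx)
      (Fin.forall_fin_succ.2 ⟨hua, Fin.forall_fin_two.2 ⟨hva, hba⟩⟩)
      (fun i y h => (h ▸ hz i).param_mem_Icc)
      (by linarith [ih _ (by simp) hp hb hu hv rfl]) (by linarith [ih _ (by simp) hq hb hu hv rfl])
      (Fin.forall_fin_succ.2 ⟨fun _ _ => by simp [d_symm u b, mul_comm],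
        Fin.forall_fin_two.2 ⟨fun _ _ => by simp [d_symm v b, d_symm v u, mul_comm],
          fun _ _ => by simpa using hbb⟩⟩)
    linarith

end SegTerm

def SegSpace (X : Type*) : Type _ := {a : SegTerm X // a.Valid}

namespace SegSpace

open SegTerm

variable {X : Type*}

def ofBase (x : X) : SegSpace X := ⟨base x, trivial⟩

open Classical in
noncomputable def segPoint (a b : SegSpace X) (t : ℝ) : SegSpace X :=
  if h : a ≠ b ∧ t ∈ Ioo 0 1 then ⟨seg a.1 b.1 t, a.2, b.2, fun e => h.1 (Subtype.ext e), h.2⟩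
  else if t ≤ 0 then a else b

lemma segPoint_zero (a b : SegSpace X) : segPoint a b 0 = a := by
  simp [segPoint]

lemma segPoint_one (a b : SegSpace X) : segPoint a b 1 = b := by
  simp [segPoint]

lemma segPoint_self (a : SegSpace X) (t : ℝ) : segPoint a a t = a := by
  simp [segPoint]

lemma segPoint_val_eq {a b : SegSpace X} (hab : a ≠ b) {t : ℝ} (ht : t ∈ Ioo 0 1) :
    (segPoint a b t).1 = seg a.1 b.1 t := by
  simp [segPoint, hab, ht]

variable [MetricSpace X]

noncomputable instance : MetricSpace (SegSpace X) where
  dist a b := d a.1 b.1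
  dist_self a := d_self a.1
  dist_comm a b := d_symm a.1 b.1
  dist_triangle a b c := d_triangle a.2 b.2 c.2
  eq_of_dist_eq_zero {a b} h := Subtype.ext (eq_of_d_eq_zero a.2 b.2 h)

lemma dist_def (a b : SegSpace X) : dist a b = d a.1 b.1 := rfl

theorem isPtolemy (hX : IsPtolemy X) : IsPtolemy (SegSpace X) :=
  fun a b u v => d_ptolemy hX a.2 b.2 u.2 v.2

theorem isometry_ofBase : Isometry (ofBase : X → SegSpace X) :=
  Isometry.of_dist_eq fun x y => d_base_base x y

lemma d_segPoint_left {a b : SegSpace X} (hab : a ≠ b) {s : ℝ} (hs : s ∈ Icc 0 1) {z : SegTerm X}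
    (hw : z.weight ≤ a.1.weight + b.1.weight + 1) (hz : ∀ y, z = seg a.1 b.1 y → y ∈ Icc 0 1) :
    d (segPoint a b s).1 z = d (seg a.1 b.1 s) z := by
  rcases hs.1.eq_or_lt with rfl | hs0
  · rw [segPoint_zero, d_seg_zero (fun y hy => (hz y hy).1) (by simpa using hw)]
  rcases hs.2.eq_or_lt with rfl | hs1
  · rw [segPoint_one, d_seg_one (fun y hy => (hz y hy).2) (by simpa using hw)]
  rw [segPoint_val_eq hab ⟨hs0, hs1⟩]

theorem dist_segPoint (a b : SegSpace X) {s t : ℝ} (hs : s ∈ Icc 0 1) (ht : t ∈ Icc 0 1) :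
    dist (segPoint a b s) (segPoint a b t) = |s - t| * dist a b := by
  rcases eq_or_ne a b with rfl | hab
  · simp [segPoint_self]
  have hwt : (segPoint a b t).1.weight ≤ a.1.weight + b.1.weight + 1 ∧
      ∀ y, (segPoint a b t).1 = seg a.1 b.1 y → y ∈ Icc 0 1 := by
    rcases ht.1.eq_or_lt with rfl | ht0
    · rw [segPoint_zero]
      exact ⟨by omega, fun y h => by have := congrArg weight h; simp at this; omega⟩
    rcases ht.2.eq_or_lt with rfl | ht1
    · rw [segPoint_one]
      exact ⟨by omega, fun y h => by have := congrArg weight h; simp at this; omega⟩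
    rw [segPoint_val_eq hab ⟨ht0, ht1⟩]
    exact ⟨by simp, fun y h => by cases h; exact ht⟩
  rw [dist_def, d_segPoint_left hab hs hwt.1 hwt.2, d_symm,
    d_segPoint_left hab ht (by simp) fun y h => by cases h; exact hs, d_seg_seg, abs_sub_comm]
  rfl

noncomputable def segPath (a b : SegSpace X) (τ : ℝ) : SegSpace X := segPoint a b (τ / dist a b)

theorem isGeodesicSegment_segPath (a b : SegSpace X) : IsGeodesicSegment (segPath a b) a b := by
  rcases eq_or_ne a b with rfl | hab
  · refine ⟨by simp [segPath, segPoint_self], by simp [segPath, segPoint_self], ?_⟩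
    simp_all
  have hd : 0 < dist a b := dist_pos.2 hab
  have hmem : ∀ s ∈ Icc 0 (dist a b), s / dist a b ∈ Icc 0 1 := fun s hs =>
    ⟨div_nonneg hs.1 hd.le, div_le_one_of_le₀ hs.2 hd.le⟩
  refine ⟨by simp [segPath, segPoint_zero], by simp [segPath, hd.ne', segPoint_one],
    fun s hs t ht => ?_⟩
  rw [segPath, segPath, dist_segPoint a b (hmem s hs) (hmem t ht), ← sub_div, abs_div,
    abs_of_pos hd, div_mul_cancel₀ _ hd.ne']

theorem isGeodesicSpace : IsGeodesicSpace (SegSpace X) :=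
  fun a b => ⟨segPath a b, isGeodesicSegment_segPath a b⟩

theorem not_uniquelyGeodesic {γ : ℝ → X} {x y : X} (hxy : x ≠ y)
    (hγ : IsGeodesicSegment γ x y) : ¬ UniquelyGeodesic (SegSpace X) := by
  intro h
  have hd : 0 < dist (ofBase x) (ofBase y) := by
    rw [isometry_ofBase.dist_eq]; exact dist_pos.2 hxy
  have hmid := h _ _ _ _ (isGeodesicSegment_segPath (ofBase x) (ofBase y))
    (hγ.comp_isometry isometry_ofBase) (dist (ofBase x) (ofBase y) / 2) ⟨by positivity, by linarith⟩
  have hne : ofBase x ≠ ofBase y := fun e => hxy (isometry_ofBase.injective e)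
  have := congrArg Subtype.val hmid
  rw [segPath, div_div_cancel_left' hd.ne', segPoint_val_eq hne (by norm_num)] at this
  simp [ofBase] at this

end SegSpace

theorem exists_geodesic_ptolemy_not_uniquely_geodesic :
    ∃ (Y : Type) (_ : MetricSpace Y),
      IsGeodesicSpace Y ∧ IsPtolemy Y ∧ ¬ UniquelyGeodesic Y :=
  ⟨SegSpace ℝ, inferInstance, SegSpace.isGeodesicSpace,
    SegSpace.isPtolemy (isPtolemy_of_innerProductSpace ℝ),
    SegSpace.not_uniquelyGeodesic zero_ne_one ⟨rfl, by simp, fun s _ t _ => Real.dist_eq s t⟩⟩
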